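/- arXiv:math/0305004 — 5 statements merged into one kernel-verified Lean document; each statement's English description precedes it below -/
import Mathlib

section
/- The determinant of the n×n Cauchy matrix C with entries C_{ij} = 1/(x_i + y_j) equals (∏_{1≤i<j≤n} (x_j - x_i)(y_j - y_i)) / (∏_{1≤i,j≤n} (x_i + y_j)). -/
/-!
Eliminating the first row of the Cauchy matrix against the pivot `1 / (x 0 + y 0)` leaves the
Schur complement with entries
`1/(xᵢ+yⱼ) - (x₀+y₀)/((xᵢ+y₀)(x₀+yⱼ)) = (xᵢ-x₀)/(xᵢ+y₀) · (yⱼ-y₀)/(x₀+yⱼ) · 1/(xᵢ+yⱼ)`,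
i.e. the Cauchy matrix of the remaining variables with rescaled rows and columns.
Induction on `n` then produces the factors of the product formula one layer at a time.
-/

open Finset

namespace Matrix

variable {R K : Type*} [CommRing R] [Field K] {n : ℕ}

theorem det_succ_of_column_zero_succ_eq_zero (A : Matrix (Fin (n + 1)) (Fin (n + 1)) R)
    (hA : ∀ i : Fin n, A i.succ 0 = 0) :
    A.det = A 0 0 * (A.submatrix Fin.succ Fin.succ).det := by
  simp [det_succ_column_zero A, Fin.sum_univ_succ, hA]

theorem det_succ_eq_mul_det_schur (A : Matrix (Fin (n + 1)) (Fin (n + 1)) K) (hA : A 0 0 ≠ 0) :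
    A.det = A 0 0 *
      (of fun i j : Fin n => A i.succ j.succ - A i.succ 0 * A 0 j.succ / A 0 0).det := by
  set B : Matrix (Fin (n + 1)) (Fin (n + 1)) K :=
    of (Fin.cons (A 0) fun i => A i.succ - (A i.succ 0 / A 0 0) • A 0)
  have hAB : A.det = B.det :=
    det_eq_of_forall_row_eq_smul_add_const (Fin.cons 0 fun i => A i.succ 0 / A 0 0) 0 rfl
      fun i j => by cases i using Fin.cases <;> simp [B]
  rw [hAB, det_succ_of_column_zero_succ_eq_zero B fun i => by simp [B, hA]]
  congr 2 with i j
  simp only [B, submatrix_apply, of_apply, Fin.cons_succ, Pi.sub_apply, Pi.smul_apply,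
    smul_eq_mul]
  ring

theorem det_of_mul_mul {m : Type*} [Fintype m] [DecidableEq m] (u v : m → R)
    (M : Matrix m m R) :
    (of fun i j => u i * v j * M i j).det = (∏ i, u i) * (∏ j, v j) * M.det := by
  simp_rw [mul_assoc]
  exact (det_mul_column u (of fun i j => v j * M i j)).trans (by rw [det_mul_row])

end Matrix

variable {K : Type*} [Field K]

def cauchyMatrix {m n : Type*} (x : m → K) (y : n → K) : Matrix m n K :=
  Matrix.of fun i j => 1 / (x i + y j)

theorem det_cauchyMatrix_succ {n : ℕ} (x y : Fin (n + 1) → K) (h : ∀ i j, x i + y j ≠ 0) :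
    (cauchyMatrix x y).det =
      (∏ i : Fin n, (x i.succ - x 0) / (x i.succ + y 0)) *
        (∏ j : Fin n, (y j.succ - y 0) / (x 0 + y j.succ)) / (x 0 + y 0) *
          (cauchyMatrix (Fin.tail x) (Fin.tail y)).det := by
  have hschur : (Matrix.of fun i j : Fin n => cauchyMatrix x y i.succ j.succ -
      cauchyMatrix x y i.succ 0 * cauchyMatrix x y 0 j.succ / cauchyMatrix x y 0 0) =
      Matrix.of fun i j => (x i.succ - x 0) / (x i.succ + y 0) *
        ((y j.succ - y 0) / (x 0 + y j.succ)) * cauchyMatrix (Fin.tail x) (Fin.tail y) i j := by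
    ext i j
    simp only [cauchyMatrix, Matrix.of_apply, Fin.tail]
    field_simp [h 0 0, h 0 j.succ, h i.succ 0, h i.succ j.succ]
    ring
  rw [Matrix.det_succ_eq_mul_det_schur _ (by simpa [cauchyMatrix] using h 0 0), hschur,
    Matrix.det_of_mul_mul]
  simp only [cauchyMatrix, Matrix.of_apply]
  ring

theorem det_cauchyMatrix {n : ℕ} (x y : Fin n → K) (h : ∀ i j, x i + y j ≠ 0) :
    (cauchyMatrix x y).det =
      (∏ i, ∏ j ∈ Ioi i, (x j - x i) * (y j - y i)) / ∏ i, ∏ j, (x i + y j) := by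
  induction n with
  | zero => simp
  | succ n ih =>
    rw [det_cauchyMatrix_succ x y h, ih (Fin.tail x) (Fin.tail y) fun i j => h i.succ j.succ]
    simp only [Fin.prod_univ_succ, Fin.prod_Ioi_zero, Fin.prod_Ioi_succ, prod_mul_distrib,
      Fin.tail, div_eq_mul_inv, mul_inv, prod_inv_distrib]
    ring

/-- The determinant of the `n × n` Cauchy matrix `C i j = 1 / (x i + y j)` equals
`(∏_{i<j} (x j - x i) * (y j - y i)) / (∏_{i,j} (x i + y j))`. -/
theorem cauchy_det (n : ℕ) (x y : Fin n → ℝ) (h : ∀ i j, x i + y j ≠ 0) :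
    (Matrix.of fun i j : Fin n => 1 / (x i + y j)).det =
      (∏ i, ∏ j ∈ Finset.univ.filter (fun j => i < j), (x j - x i) * (y j - y i)) /
        ∏ i, ∏ j, (x i + y j) := by
  simpa only [cauchyMatrix, filter_lt_eq_Ioi] using det_cauchyMatrix x y h
end

section
/- If x_1,...,x_n are distinct positive reals and 0 ≤ μ_1 < ... < μ_n are integers, then the generalized Vandermonde matrix G_{ij} = x_i^{μ_j} has positive determinant. -/
/-!
A nonzero kernel vector `c` of the matrix `(x i ^ e j)` with distinct real exponents `e` gives a
sum `∑ c j * t ^ e j` vanishing at the `n` distinct positive points `x i`. Dividing by one of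
the powers and differentiating removes a term, and Rolle's theorem loses at most one zero, so by
induction a sum with `m` nonzero terms has fewer than `m` positive zeros; hence the determinant
never vanishes. Deforming the exponents `μ j` linearly (through real exponents) into `j` keeps
them strictly increasing, so the determinant keeps its sign, and at the end it is the Vandermonde
determinant `∏ i < j, (x j - x i) > 0`.
-/

open Finset

theorem exists_deriv_zeros_card_add_one_ge {s : Set ℝ} (hs : s.OrdConnected)
    {g g' : ℝ → ℝ} (hg : ∀ t ∈ s, HasDerivAt g (g' t) t) {S : Finset ℝ}
    (hS : ∀ t ∈ S, t ∈ s ∧ g t = 0) :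
    ∃ T : Finset ℝ, (∀ t ∈ T, t ∈ s ∧ g' t = 0) ∧ S.card ≤ T.card + 1 := by
  have rolle : ∀ x ∈ S, ∀ y ∈ S, x < y → ∃ z ∈ Set.Ioo x y, g' z = 0 := fun x hx y hy hxy ↦
    exists_hasDerivAt_eq_zero hxy
      (fun t ht ↦ (hg t (hs.out (hS x hx).1 (hS y hy).1 ht)).continuousAt.continuousWithinAt)
      ((hS x hx).2.trans (hS y hy).2.symm)
      (fun t ht ↦ hg t (hs.out (hS x hx).1 (hS y hy).1 (Set.Ioo_subset_Icc_self ht)))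
  choose! z hz using rolle
  classical
  refine ⟨((S ×ˢ S).filter fun p ↦ p.1 < p.2).image fun p ↦ z p.1 p.2, ?_, ?_⟩
  · simp only [Finset.mem_image, mem_filter, mem_product, Prod.exists]
    rintro _ ⟨x, y, ⟨⟨hx, hy⟩, hxy⟩, rfl⟩
    exact ⟨hs.out (hS x hx).1 (hS y hy).1 (Set.Ioo_subset_Icc_self (hz x hx y hy hxy).1),
      (hz x hx y hy hxy).2⟩
  · refine card_le_of_interleaved fun x hx y hy hxy _ ↦ ⟨z x y, ?_, (hz x hx y hy hxy).1⟩
    exact Finset.mem_image.2 ⟨(x, y), mem_filter.2 ⟨mem_product.2 ⟨hx, hy⟩, hxy⟩, rfl⟩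

theorem card_pos_zeros_rpow_sum_lt {ι : Type*} [DecidableEq ι] (F : Finset ι) (hF : F.Nonempty)
    (c e : ι → ℝ) (hc : ∀ a ∈ F, c a ≠ 0) (he : Set.InjOn e F) (S : Finset ℝ)
    (hS : ∀ t ∈ S, 0 < t ∧ ∑ a ∈ F, c a * t ^ e a = 0) : S.card < F.card := by
  induction F using Finset.strongInduction generalizing c e S with
  | H F ih =>
  obtain ⟨a₀, ha₀⟩ := hF
  rcases (F.erase a₀).eq_empty_or_nonempty with hF' | hF'
  · obtain rfl : F = {a₀} := (erase_eq_empty_iff F a₀).1 hF' |>.resolve_left (ne_empty_of_mem ha₀)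
    have hS' : S = ∅ := eq_empty_of_forall_notMem fun t ht ↦ by
      obtain ⟨htpos, hsum⟩ := hS t ht
      simp only [sum_singleton] at hsum
      exact mul_ne_zero (hc a₀ (mem_singleton_self a₀)) (Real.rpow_pos_of_pos htpos _).ne' hsum
    simp [hS']
  -- dividing by `t ^ e a₀` kills one term of the derivative without changing positive zeros
  set g : ℝ → ℝ := fun t ↦ ∑ a ∈ F, c a * t ^ (e a - e a₀)
  set g' : ℝ → ℝ := fun t ↦ ∑ a ∈ F.erase a₀, c a * (e a - e a₀) * t ^ (e a - e a₀ - 1)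
  have hg : ∀ t ∈ Set.Ioi (0 : ℝ), HasDerivAt g (g' t) t := by
    intro t ht
    refine (HasDerivAt.fun_sum (u := F) fun a _ ↦
      (Real.hasDerivAt_rpow_const (p := e a - e a₀) (Or.inl ht.ne')).const_mul (c a)).congr_deriv ?_
    rw [← sum_erase (a := a₀) _ (by simp)]
    exact sum_congr rfl fun a _ ↦ by ring
  have hgS : ∀ t ∈ S, t ∈ Set.Ioi 0 ∧ g t = 0 := by
    intro t ht
    obtain ⟨htpos, hsum⟩ := hS t ht
    refine ⟨htpos, ?_⟩
    have : g t = (∑ a ∈ F, c a * t ^ e a) / t ^ e a₀ := by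
      rw [sum_div]
      exact sum_congr rfl fun a _ ↦ by rw [Real.rpow_sub htpos, mul_div_assoc]
    rw [this, hsum, zero_div]
  obtain ⟨T, hT, hST⟩ := exists_deriv_zeros_card_add_one_ge Set.ordConnected_Ioi hg hgS
  have hTlt : T.card < (F.erase a₀).card :=
    ih _ (erase_ssubset ha₀) hF' (fun a ↦ c a * (e a - e a₀)) (fun a ↦ e a - e a₀ - 1)
      (fun a ha ↦ mul_ne_zero (hc a (mem_of_mem_erase ha))
        (sub_ne_zero.2 fun h ↦ ne_of_mem_erase ha (he (mem_of_mem_erase ha) ha₀ h)))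
      (fun a ha b hb hab ↦ he (mem_of_mem_erase ha) (mem_of_mem_erase hb) (by simpa using hab))
      T hT
  rw [card_erase_of_mem ha₀] at hTlt
  omega

theorem Matrix.det_of_rpow_ne_zero {ι : Type*} [Fintype ι] [DecidableEq ι] {x : ι → ℝ}
    (hxpos : ∀ i, 0 < x i) (hx : Function.Injective x) {e : ι → ℝ} (he : Function.Injective e) :
    (Matrix.of fun i j ↦ x i ^ e j).det ≠ 0 := by
  intro hdet
  obtain ⟨v, hv, hkernel⟩ := Matrix.exists_mulVec_eq_zero_iff.2 hdet
  have hsupp : (univ.filter fun j ↦ v j ≠ 0).Nonempty := by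
    obtain ⟨j, hj⟩ := Function.ne_iff.1 hv
    exact ⟨j, mem_filter.2 ⟨mem_univ j, hj⟩⟩
  have hlt := card_pos_zeros_rpow_sum_lt _ hsupp v e (fun j hj ↦ (mem_filter.1 hj).2)
    he.injOn (univ.image x) fun t ht ↦ by
      obtain ⟨i, -, rfl⟩ := Finset.mem_image.1 ht
      refine ⟨hxpos i, ?_⟩
      rw [sum_filter_of_ne fun j _ hj ↦ left_ne_zero_of_mul hj]
      simpa [Matrix.mulVec, dotProduct, mul_comm] using congrFun hkernel i
  rw [card_image_of_injective _ hx] at hlt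
  exact (hlt.trans_le (card_filter_le _ _)).false

theorem StrictMono.convex_comb {α : Type*} [Preorder α] {f g : α → ℝ} (hf : StrictMono f)
    (hg : StrictMono g) {s : ℝ} (hs : s ∈ Set.Icc (0 : ℝ) 1) :
    StrictMono fun j ↦ (1 - s) * f j + s * g j := by
  intro i j hij
  have hfij := sub_pos.2 (hf hij)
  have hgij := sub_pos.2 (hg hij)
  show (1 - s) * f i + s * g i < (1 - s) * f j + s * g j
  nlinarith [mul_nonneg (sub_nonneg.2 hs.2) hfij.le, mul_nonneg hs.1 hgij.le]

theorem Matrix.det_vandermonde_pos {R : Type*} [CommRing R] [PartialOrder R]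
    [IsStrictOrderedRing R] {n : ℕ} {x : Fin n → R} (hx : StrictMono x) :
    0 < (Matrix.vandermonde x).det := by
  rw [Matrix.det_vandermonde]
  exact prod_pos fun i _ ↦ prod_pos fun j hj ↦ sub_pos.2 (hx (mem_Ioi.1 hj))

theorem pos_of_continuousOn_Icc_of_ne_zero {f : ℝ → ℝ} {a b : ℝ} (hab : a ≤ b)
    (hf : ContinuousOn f (Set.Icc a b)) (hne : ∀ s ∈ Set.Icc a b, f s ≠ 0) (hb : 0 < f b) :
    0 < f a := by
  by_contra! ha
  obtain ⟨s, hs, hfs⟩ := intermediate_value_Icc hab hf ⟨ha, hb.le⟩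
  exact hne s hs hfs

/-- If `x 1 < … < x n` are positive reals and `μ 1 < … < μ n` are nonnegative integers,
then the generalized Vandermonde matrix `G i j = x i ^ (μ j)` has positive determinant. -/
theorem genVandermonde_det_pos (n : ℕ) (x : Fin n → ℝ) (hxpos : ∀ i, 0 < x i)
    (hx : StrictMono x) (μ : Fin n → ℕ) (hμ : StrictMono μ) :
    0 < (Matrix.of fun i j : Fin n => x i ^ (μ j)).det := by
  set D : ℝ → ℝ := fun s ↦
    (Matrix.of fun i j : Fin n ↦ x i ^ ((1 - s) * (μ j : ℝ) + s * ((j : ℕ) : ℝ))).det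
  have hD : ContinuousOn D (Set.Icc 0 1) := by
    refine Continuous.continuousOn (Continuous.matrix_det (continuous_matrix fun i j ↦ ?_))
    exact continuous_const.rpow (by fun_prop) fun _ ↦ Or.inl (hxpos i).ne'
  have hD_ne : ∀ s ∈ Set.Icc (0 : ℝ) 1, D s ≠ 0 := fun s hs ↦
    Matrix.det_of_rpow_ne_zero hxpos hx.injective
      ((Nat.strictMono_cast.comp hμ).convex_comb
        (Nat.strictMono_cast.comp Fin.val_strictMono) hs).injective
  have hD_one : 0 < D 1 := by
    simpa [D, Real.rpow_natCast, Matrix.vandermonde] using Matrix.det_vandermonde_pos hx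
  simpa [D, Real.rpow_natCast] using pos_of_continuousOn_Icc_of_ne_zero zero_le_one hD hD_ne hD_one
end

section
/- If A = LU is an LU factorization of an invertible n×n matrix A where all leading principal minors of A are nonzero, with L unit lower triangular and U upper triangular, then each entry U_{kj} (for k ≤ j) equals det(A[{1..k}, {1..k-1}∪{j}]) / det(A[{1..k-1},{1..k-1}]), i.e., each nontrivial entry of U is a quotient of minors of A. -/
/-!
Since `L` is lower triangular, the first `m` rows of `L * U` only involve the first `m` rows of
`U`, so a minor of `A` on the leading rows factors as the leading principal minor of `L` (which
is `1`) times the corresponding minor of `U`. Such a minor of `U` is upper triangular: on the rows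
`{0..k}` and columns `{0..k-1} ∪ {j}` it equals `U 0 0 ⋯ U (k-1) (k-1) * U k j`, and on the rows
and columns `{0..k-1}` it equals `U 0 0 ⋯ U (k-1) (k-1)`, which is nonzero by hypothesis.
-/

namespace Matrix

variable {R : Type*}

lemma IsUpperTriangular.submatrix_of_strictMono {α β : Type*} [Preorder α] [Preorder β]
    [Zero R] {M : Matrix α α R} (hM : M.IsUpperTriangular) {f : β → α} (hf : StrictMono f) :
    (M.submatrix f f).IsUpperTriangular :=
  fun _ _ h => hM (hf h)

variable {n m : ℕ}

lemma submatrix_castLE_mul_of_isLowerTriangular [NonUnitalNonAssocSemiring R]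
    {L : Matrix (Fin n) (Fin n) R} (hL : L.IsLowerTriangular) (U : Matrix (Fin n) (Fin n) R)
    (hm : m ≤ n) {ι : Type*} (c : ι → Fin n) :
    (L * U).submatrix (Fin.castLE hm) c =
      L.submatrix (Fin.castLE hm) (Fin.castLE hm) * U.submatrix (Fin.castLE hm) c := by
  ext p i
  refine (Fintype.sum_of_injective _ (Fin.castLE_injective hm) _ _ (fun q hq => ?_)
    (fun _ => rfl)).symm
  have hpq : Fin.castLE hm p < q := by
    rw [Fin.range_castLE, Set.mem_ofPred_eq, not_lt] at hq
    exact Fin.lt_def.2 (p.isLt.trans_le hq)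
  exact mul_eq_zero_of_left (hL hpq) _

lemma det_submatrix_castLE_mul_of_isLowerTriangular [CommRing R]
    {L : Matrix (Fin n) (Fin n) R} (hL : L.IsLowerTriangular) (hLdiag : ∀ i, L i i = 1)
    (U : Matrix (Fin n) (Fin n) R) (hm : m ≤ n) (c : Fin m → Fin n) :
    ((L * U).submatrix (Fin.castLE hm) c).det = (U.submatrix (Fin.castLE hm) c).det := by
  have hL' : (L.submatrix (Fin.castLE hm) (Fin.castLE hm)).IsLowerTriangular :=
    fun _ _ h => hL (Fin.strictMono_castLE hm h)
  rw [submatrix_castLE_mul_of_isLowerTriangular hL, det_mul, det_of_isLowerTriangular _ hL']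
  simp [hLdiag]

lemma det_submatrix_castLE_of_isUpperTriangular [CommRing R] {U : Matrix (Fin n) (Fin n) R}
    (hU : U.IsUpperTriangular) {k : ℕ} (hk : k + 1 ≤ n) (c : Fin (k + 1) → Fin n)
    (hc : ∀ i : Fin k, c i.castSucc = Fin.castLE (Nat.le_of_succ_le hk) i) :
    (U.submatrix (Fin.castLE hk) c).det =
      (∏ i : Fin k,
          U (Fin.castLE (Nat.le_of_succ_le hk) i) (Fin.castLE (Nat.le_of_succ_le hk) i)) *
        U (Fin.castLE hk (Fin.last k)) (c (Fin.last k)) := by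
  have hU' : (U.submatrix (Fin.castLE hk) c).IsUpperTriangular := by
    intro p q hqp
    obtain ⟨q, rfl⟩ := Fin.exists_castSucc_eq.2 (Fin.ne_last_of_lt hqp)
    rw [submatrix_apply, hc, ← Fin.castLE_castSucc q hk]
    exact hU (Fin.strictMono_castLE hk hqp)
  rw [det_of_isUpperTriangular hU', Fin.prod_univ_castSucc]
  simp only [submatrix_apply, hc, Fin.castLE_castSucc]

end Matrix

open Matrix

theorem lu_entries_quotient_of_minors_general {F : Type*} [Field F] (n : ℕ)
    (A L U : Matrix (Fin n) (Fin n) F)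
    (hminors : ∀ (k : ℕ) (hk : k ≤ n),
      (A.submatrix (Fin.castLE hk) (Fin.castLE hk)).det ≠ 0)
    (hLdiag : ∀ i, L i i = 1)
    (hLlower : ∀ i j : Fin n, i < j → L i j = 0)
    (hUupper : ∀ i j : Fin n, j < i → U i j = 0)
    (hA : A = L * U) :
    ∀ k j : Fin n, k ≤ j →
      U k j =
        (A.submatrix
            (Fin.castLE (Nat.succ_le_of_lt k.isLt) : Fin ((k : ℕ) + 1) → Fin n)
            (fun i : Fin ((k : ℕ) + 1) =>
              if h : (i : ℕ) < (k : ℕ) then (⟨(i : ℕ), h.trans k.isLt⟩ : Fin n) else j)).det /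
          (A.submatrix
              (Fin.castLE (le_of_lt k.isLt) : Fin (k : ℕ) → Fin n)
              (Fin.castLE (le_of_lt k.isLt) : Fin (k : ℕ) → Fin n)).det := by
  intro k j _
  have hL : L.IsLowerTriangular := fun i j h => hLlower i j h
  have hU : U.IsUpperTriangular := fun i j h => hUupper i j h
  have hden := hminors k k.isLt.le
  subst hA
  simp only [det_submatrix_castLE_mul_of_isLowerTriangular hL hLdiag] at hden ⊢
  rw [det_of_isUpperTriangular (hU.submatrix_of_strictMono (Fin.strictMono_castLE _))] at hden ⊢
  rw [det_submatrix_castLE_of_isUpperTriangular hU _ _ (fun i => by simp [Fin.castLE])]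
  simp only [Fin.val_last, lt_irrefl, dite_false, submatrix_apply] at hden ⊢
  rw [show Fin.castLE k.isLt (Fin.last k) = k from Fin.ext rfl, mul_div_cancel_left₀ _ hden]

/-- If `A = L * U` with `L` unit lower triangular and `U` upper triangular, and all leading
principal minors of the invertible matrix `A` are nonzero, then for `k ≤ j` the entry
`U k j` equals the quotient of minors
`det A[{0..k}, {0..k-1} ∪ {j}] / det A[{0..k-1}, {0..k-1}]` (0-based indexing). -/
theorem lu_entries_quotient_of_minors {F : Type*} [Field F] (n : ℕ)
    (A L U : Matrix (Fin n) (Fin n) F)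
    (hinv : IsUnit A.det)
    (hminors : ∀ (k : ℕ) (hk : k ≤ n),
      (A.submatrix (Fin.castLE hk) (Fin.castLE hk)).det ≠ 0)
    (hLdiag : ∀ i, L i i = 1)
    (hLlower : ∀ i j : Fin n, i < j → L i j = 0)
    (hUupper : ∀ i j : Fin n, j < i → U i j = 0)
    (hA : A = L * U) :
    ∀ k j : Fin n, k ≤ j →
      U k j =
        (A.submatrix
            (Fin.castLE (Nat.succ_le_of_lt k.isLt) : Fin ((k : ℕ) + 1) → Fin n)
            (fun i : Fin ((k : ℕ) + 1) =>
              if h : (i : ℕ) < (k : ℕ) then (⟨(i : ℕ), h.trans k.isLt⟩ : Fin n) else j)).det /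
          (A.submatrix
              (Fin.castLE (le_of_lt k.isLt) : Fin (k : ℕ) → Fin n)
              (Fin.castLE (le_of_lt k.isLt) : Fin (k : ℕ) → Fin n)).det :=
  lu_entries_quotient_of_minors_general n A L U hminors hLdiag hLlower hUupper hA
end

section
/- For the function f(x₁,...,xₙ) = ∏_m f_m(x) where each f_m is of the form x_i, x_i − x_j, or x_i + x_j, the relative perturbation of f under relative perturbations of the inputs is controlled by the relative gaps: if x̂_i = x_i(1+δ_i) with |δ_i| ≤ δ, then |f(x̂) − f(x)| / |f(x)| ≤ (1 + Cδ)^M − 1 where M is the number of factors and C = max_m (|x_i|+|x_j|)/|x_i ∓ x_j| over the difference/sum factors (C = 1 for factors x_i), provided all factors of f are nonzero at x and C·δ < 1. -/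
/-!
A perturbation `x i ↦ x i * (1 + d i)` changes `x i ± x j` by `x i * d i ± x j * d j`, which is
at most `δ * (|x i| + |x j|) ≤ C * δ * |x i ± x j|` in absolute value; so every factor has
relative error at most `ε = C * δ`, and relative errors `ε` of `M` factors compound to at most
`(1 + ε) ^ M - 1`.
-/

open Finset

theorem Finset.norm_prod_sub_prod_le {ι R : Type*} [NormedCommRing R] [NormOneClass R]
    (s : Finset ι) {a b : ι → R} {ε : ℝ} (hε : 0 ≤ ε)
    (h : ∀ i ∈ s, ‖a i - b i‖ ≤ ε * ‖b i‖) :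
    ‖∏ i ∈ s, a i - ∏ i ∈ s, b i‖ ≤ ((1 + ε) ^ #s - 1) * ∏ i ∈ s, ‖b i‖ := by
  induction s using Finset.cons_induction with
  | empty => simp
  | cons i s _ ih =>
    rw [prod_cons, prod_cons, prod_cons, card_cons]
    have hab : ‖a i - b i‖ ≤ ε * ‖b i‖ := h i (mem_cons_self i s)
    have ha : ‖a i‖ ≤ (1 + ε) * ‖b i‖ := by
      linarith [norm_le_norm_add_norm_sub' (a i) (b i)]
    have hs := ih fun j hj => h j (mem_cons_of_mem hj)
    have hB : ‖∏ j ∈ s, b j‖ ≤ ∏ j ∈ s, ‖b j‖ := Finset.norm_prod_le s b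
    have hpow : 1 ≤ (1 + ε) ^ #s := one_le_pow₀ (by linarith)
    calc ‖a i * ∏ j ∈ s, a j - b i * ∏ j ∈ s, b j‖
        = ‖(a i - b i) * ∏ j ∈ s, b j + a i * (∏ j ∈ s, a j - ∏ j ∈ s, b j)‖ := by ring_nf
      _ ≤ ‖a i - b i‖ * ‖∏ j ∈ s, b j‖ + ‖a i‖ * ‖∏ j ∈ s, a j - ∏ j ∈ s, b j‖ :=
        (norm_add_le _ _).trans (add_le_add (norm_mul_le _ _) (norm_mul_le _ _))
      _ ≤ ε * ‖b i‖ * ∏ j ∈ s, ‖b j‖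
          + (1 + ε) * ‖b i‖ * (((1 + ε) ^ #s - 1) * ∏ j ∈ s, ‖b j‖) := by
        gcongr
      _ = ((1 + ε) ^ (#s + 1) - 1) * (‖b i‖ * ∏ j ∈ s, ‖b j‖) := by ring

theorem abs_mul_one_add_sub_self_le {x d δ : ℝ} (hd : |d| ≤ δ) :
    |x * (1 + d) - x| ≤ δ * |x| := by
  rw [show x * (1 + d) - x = x * d by ring, abs_mul, mul_comm δ]
  exact mul_le_mul_of_nonneg_left hd (abs_nonneg x)

theorem abs_mul_one_add_add_mul_one_add_sub_add_le {x y d e δ : ℝ} (hd : |d| ≤ δ) (he : |e| ≤ δ) :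
    |x * (1 + d) + y * (1 + e) - (x + y)| ≤ δ * (|x| + |y|) := by
  calc |x * (1 + d) + y * (1 + e) - (x + y)| = |(x * (1 + d) - x) + (y * (1 + e) - y)| := by
        ring_nf
    _ ≤ δ * |x| + δ * |y| :=
      (abs_add_le _ _).trans (add_le_add (abs_mul_one_add_sub_self_le hd)
        (abs_mul_one_add_sub_self_le he))
    _ = δ * (|x| + |y|) := by ring

theorem relative_perturbation_of_factored_general (n M : ℕ)
    (fm : Fin M → (Fin n → ℝ) → ℝ)
    (hform : ∀ m, (∃ i, fm m = fun x => x i) ∨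
      (∃ i j, fm m = fun x => x i - x j) ∨ (∃ i j, fm m = fun x => x i + x j))
    (x : Fin n → ℝ)
    (C δ : ℝ) (hC1 : 1 ≤ C)
    (hCdiff : ∀ (m : Fin M) (i j : Fin n),
      fm m = (fun x => x i - x j) → |x i| + |x j| ≤ C * |x i - x j|)
    (hCsum : ∀ (m : Fin M) (i j : Fin n),
      fm m = (fun x => x i + x j) → |x i| + |x j| ≤ C * |x i + x j|)
    (hδ0 : 0 ≤ δ)
    (d : Fin n → ℝ) (hd : ∀ i, |d i| ≤ δ) :
    |(∏ m, fm m (fun i => x i * (1 + d i))) - ∏ m, fm m x| / |∏ m, fm m x| ≤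
      (1 + C * δ) ^ M - 1 := by
  have hCδ0 : 0 ≤ C * δ := by positivity
  have hfactor : ∀ m, |fm m (fun i => x i * (1 + d i)) - fm m x| ≤ C * δ * |fm m x| := by
    intro m
    rcases hform m with ⟨i, hm⟩ | ⟨i, j, hm⟩ | ⟨i, j, hm⟩ <;> rw [hm]
    · calc |x i * (1 + d i) - x i| ≤ δ * |x i| := abs_mul_one_add_sub_self_le (hd i)
        _ ≤ C * δ * |x i| := by gcongr; exact le_mul_of_one_le_left hδ0 hC1
    · have hdiff := abs_mul_one_add_add_mul_one_add_sub_add_le (x := x i) (y := -x j) (hd i) (hd j)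
      rw [abs_neg] at hdiff
      calc |x i * (1 + d i) - x j * (1 + d j) - (x i - x j)| ≤ δ * (|x i| + |x j|) := by
            convert hdiff using 2; ring
        _ ≤ C * δ * |x i - x j| := by nlinarith [hCdiff m i j hm]
    · calc |x i * (1 + d i) + x j * (1 + d j) - (x i + x j)| ≤ δ * (|x i| + |x j|) :=
            abs_mul_one_add_add_mul_one_add_sub_add_le (hd i) (hd j)
        _ ≤ C * δ * |x i + x j| := by nlinarith [hCsum m i j hm]
  have hprod := Finset.norm_prod_sub_prod_le univ (a := fun m => fm m fun i => x i * (1 + d i))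
    (b := fun m => fm m x) hCδ0 fun m _ => hfactor m
  simp only [Real.norm_eq_abs, card_univ, Fintype.card_fin, ← abs_prod] at hprod
  exact div_le_of_le_mul₀ (abs_nonneg _) (sub_nonneg.2 (one_le_pow₀ (by linarith))) hprod

/-- Relative perturbation theory for products of admissible factors: if
`f = ∏_{m} f_m` where each factor `f_m` is of the form `x i`, `x i - x j`, or `x i + x j`,
all factors are nonzero at `x`, and `C ≥ 1` bounds the reciprocal relative gaps
(`|x i| + |x j| ≤ C * |x i ∓ x j|` for each difference/sum factor), then for relative input
perturbations `x̂ i = x i * (1 + d i)` with `|d i| ≤ δ` and `C * δ < 1`, the relative change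
of `f` satisfies `|f x̂ - f x| / |f x| ≤ (1 + C δ) ^ M - 1`. -/
theorem relative_perturbation_of_factored (n M : ℕ)
    (fm : Fin M → (Fin n → ℝ) → ℝ)
    (hform : ∀ m, (∃ i, fm m = fun x => x i) ∨
      (∃ i j, fm m = fun x => x i - x j) ∨ (∃ i j, fm m = fun x => x i + x j))
    (x : Fin n → ℝ) (hnz : ∀ m, fm m x ≠ 0)
    (C δ : ℝ) (hC1 : 1 ≤ C)
    (hCdiff : ∀ (m : Fin M) (i j : Fin n),
      fm m = (fun x => x i - x j) → |x i| + |x j| ≤ C * |x i - x j|)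
    (hCsum : ∀ (m : Fin M) (i j : Fin n),
      fm m = (fun x => x i + x j) → |x i| + |x j| ≤ C * |x i + x j|)
    (hδ0 : 0 ≤ δ) (hCδ : C * δ < 1)
    (d : Fin n → ℝ) (hd : ∀ i, |d i| ≤ δ) :
    |(∏ m, fm m (fun i => x i * (1 + d i))) - ∏ m, fm m x| / |∏ m, fm m x| ≤
      (1 + C * δ) ^ M - 1 :=
  relative_perturbation_of_factored_general n M fm hform x C δ hC1 hCdiff hCsum hδ0 d hd
end

section
/- If A is an n×n matrix whose bipartite sparsity graph is acyclic (in particular, if A is bidiagonal), then det(A) is either zero or equal, up to sign, to a single product of n entries of A; i.e., at most one permutation σ contributes a nonzero term ∏_i A_{i,σ(i)} to the Leibniz expansion. -/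
/-! A nonzero Leibniz term `∏ i, A i (σ i)` is a perfect matching `i ↦ σ i` in the
sparsity graph of `A`, and a forest has at most one perfect matching. Indeed, if
`σ i₀ ≠ τ i₀`, alternating between `τ`-edges and `σ`-edges along the cycle of `σ⁻¹τ`
through `i₀` leads from row `i₀` back to column `σ i₀` without using the edge
`(i₀, σ i₀)`, so that edge is no bridge. -/

/-- The undirected bipartite sparsity graph of an `n × n` matrix `A`: vertices are the rows
(`Sum.inl`) and the columns (`Sum.inr`), with an edge between row `i` and column `j`
iff `A i j ≠ 0`. -/
def bipartiteGraph {n : ℕ} (A : Matrix (Fin n) (Fin n) ℝ) :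
    SimpleGraph (Fin n ⊕ Fin n) where
  Adj u v :=
    (∃ i j, u = Sum.inl i ∧ v = Sum.inr j ∧ A i j ≠ 0) ∨
    (∃ i j, u = Sum.inr j ∧ v = Sum.inl i ∧ A i j ≠ 0)
  symm := by
    constructor
    rintro u v (⟨i, j, rfl, rfl, h⟩ | ⟨i, j, rfl, rfl, h⟩)
    · exact Or.inr ⟨i, j, rfl, rfl, h⟩
    · exact Or.inl ⟨i, j, rfl, rfl, h⟩
  loopless := by
    constructor
    rintro u (⟨i, j, h₁, h₂, h⟩ | ⟨i, j, h₁, h₂, h⟩) <;> simp_all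

namespace Equiv.Perm

theorem symm_apply_mem_of_forall_apply_mem {α : Type*} [Finite α] (f : Perm α) {s : Set α}
    {a : α} (ha : a ∈ s) (hs : ∀ x ∈ s, f x ≠ a → f x ∈ s) : f.symm a ∈ s := by
  by_contra hna
  have hmaps : Set.MapsTo f s s := fun x hx ↦
    hs x hx fun hfx ↦ hna (by rwa [← hfx, symm_apply_apply])
  exact hna (perm_symm_mapsTo_of_mapsTo f hmaps ha)

end Equiv.Perm

namespace SimpleGraph

open Sum

theorem IsAcyclic.eq_of_forall_adj {ι κ : Type*} [Finite ι] {G : SimpleGraph (ι ⊕ κ)}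
    (hG : G.IsAcyclic) {σ τ : ι ≃ κ} (hσ : ∀ i, G.Adj (inl i) (inr (σ i)))
    (hτ : ∀ i, G.Adj (inl i) (inr (τ i))) : σ = τ := by
  ext i₀
  by_contra hne
  set H := G.deleteEdges {s(inl i₀, inr (σ i₀))}
  have hτH : ∀ i, H.Adj (inl i) (inr (τ i)) := fun i ↦ by
    by_cases hi : i = i₀
    · subst hi; simp [H, hτ, Ne.symm hne]
    · simp [H, hτ, hi]
  have hσH : ∀ i ≠ i₀, H.Adj (inl i) (inr (σ i)) := fun i hi ↦ by simp [H, hσ, hi]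
  set φ : Equiv.Perm ι := τ.trans σ.symm
  have hstep : ∀ x, φ x ≠ i₀ → H.Reachable (inl x) (inl (φ x)) := fun x hx ↦ by
    have hσφ : σ (φ x) = τ x := σ.apply_symm_apply (τ x)
    exact (hτH x).reachable.trans (hσφ ▸ (hσH (φ x) hx).reachable.symm)
  -- rows `i₀, φ i₀, φ² i₀, …` stay reachable until the orbit closes at `φ⁻¹ i₀`
  have hreach : H.Reachable (inl i₀) (inl (φ.symm i₀)) :=
    φ.symm_apply_mem_of_forall_apply_mem (s := {x | H.Reachable (inl i₀) (inl x)})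
      (Reachable.refl _) fun x hx hφx ↦ Reachable.trans hx (hstep x hφx)
  have hτφ : τ (φ.symm i₀) = σ i₀ := τ.apply_symm_apply (σ i₀)
  exact isBridge_iff.mp (isAcyclic_iff_forall_adj_isBridge.mp hG (hσ i₀))
    (hreach.trans (hτφ ▸ (hτH (φ.symm i₀)).reachable))

end SimpleGraph

theorem bipartiteGraph_adj_of_prod_ne_zero {n : ℕ} {A : Matrix (Fin n) (Fin n) ℝ}
    {σ : Equiv.Perm (Fin n)} (hσ : (∏ i, A i (σ i)) ≠ 0) (i : Fin n) :
    (bipartiteGraph A).Adj (Sum.inl i) (Sum.inr (σ i)) :=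
  .inl ⟨i, σ i, rfl, rfl, Finset.prod_ne_zero_iff.mp hσ i (Finset.mem_univ i)⟩

theorem Matrix.det_eq_zero_or_eq_sign_mul_prod {m R : Type*} [Fintype m] [DecidableEq m]
    [CommRing R] (A : Matrix m m R)
    (h : ∀ σ τ : Equiv.Perm m,
      (∏ i, A i (σ i)) ≠ 0 → (∏ i, A i (τ i)) ≠ 0 → σ = τ) :
    A.det = 0 ∨ ∃ σ : Equiv.Perm m, A.det = (Equiv.Perm.sign σ : R) * ∏ i, A i (σ i) := by
  have hdet : A.det = ∑ σ : Equiv.Perm m, (Equiv.Perm.sign σ : R) * ∏ i, A i (σ i) := by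
    simp [← A.det_transpose, det_apply']
  by_cases hz : ∀ σ : Equiv.Perm m, (∏ i, A i (σ i)) = 0
  · exact .inl (by simp [hdet, hz])
  · push Not at hz
    obtain ⟨σ, hσ⟩ := hz
    refine .inr ⟨σ, hdet.trans (Finset.sum_eq_single σ (fun τ _ hτσ ↦ ?_) (by simp))⟩
    by_cases hτ : (∏ i, A i (τ i)) = 0
    · rw [hτ, mul_zero]
    · exact absurd (h τ σ hτ hσ) hτσ

/-- If the bipartite sparsity graph of `A` is acyclic, then at most one permutation `σ`
contributes a nonzero term `∏ i, A i (σ i)` to the Leibniz expansion of `det A`; hence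
`det A` is either zero or equal, up to sign, to a single product of `n` entries of `A`. -/
theorem det_of_acyclic_sparsity (n : ℕ) (A : Matrix (Fin n) (Fin n) ℝ)
    (hacyclic : (bipartiteGraph A).IsAcyclic) :
    (∀ σ τ : Equiv.Perm (Fin n),
        (∏ i, A i (σ i)) ≠ 0 → (∏ i, A i (τ i)) ≠ 0 → σ = τ) ∧
    (A.det = 0 ∨ ∃ σ : Equiv.Perm (Fin n),
        A.det = (Equiv.Perm.sign σ : ℝ) * ∏ i, A i (σ i)) := by
  have huniq : ∀ σ τ : Equiv.Perm (Fin n),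
      (∏ i, A i (σ i)) ≠ 0 → (∏ i, A i (τ i)) ≠ 0 → σ = τ := fun σ τ hσ hτ ↦
    hacyclic.eq_of_forall_adj (bipartiteGraph_adj_of_prod_ne_zero hσ)
      (bipartiteGraph_adj_of_prod_ne_zero hτ)
  exact ⟨huniq, A.det_eq_zero_or_eq_sign_mul_prod huniq⟩
end
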